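/- Translation of THT into LTL: let 𝒜* := 𝒜 ∪ {a' : a∈𝒜} (a disjoint primed copy of each atom). For a W-free temporal formula φ over 𝒜 define φ* over 𝒜* by: ⊥*=⊥; ⊤*=⊤; a*=a'; (⊙φ)*=⊙φ* for ⊙∈{○,●}; (φ⊗ψ)*=φ*⊗ψ* for ⊗∈{∧,∨,U,R,S,T}; (φ→ψ)*=(φ→ψ)∧(φ*→ψ*). For an HT-trace ⟨H,T⟩ of length λ over 𝒜 let T* be the trace over 𝒜* of length λ with T*_i := T_i ∪ {a' : a∈H_i}. Then: (i) T*,j ⊨ a'→a in LTL for every a∈𝒜 and every j<λ (i.e., T* satisfies every excluded instance of the axiom ☐(a'→a)); and (ii) for every W-free temporal formula φ over 𝒜 and every k<λ: ⟨H,T⟩,k ⊨ φ in THT if and only if T*,k ⊨ φ* in LTL. -/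
import Mathlib


inductive Formula (A : Type) : Type
  | atom (a : A)
  | falsum
  | verum
  | conj (φ ψ : Formula A)
  | disj (φ ψ : Formula A)
  | impl (φ ψ : Formula A)
  | prev (φ : Formula A)
  | since (φ ψ : Formula A)
  | trigger (φ ψ : Formula A)
  | next (φ : Formula A)
  | untl (φ ψ : Formula A)
  | release (φ ψ : Formula A)
  | whil (φ ψ : Formula A)

/-- THT satisfaction: `satAux l T H k φ` is `⟨H,T⟩,k ⊨ φ` on traces of length `l`. -/
def satAux {A : Type} (l : ℕ∞) (T : ℕ → Set A) : (ℕ → Set A) → ℕ → Formula A → Prop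
  | H, k, .atom a => a ∈ H k
  | _, _, .falsum => False
  | _, _, .verum => True
  | H, k, .conj φ ψ => satAux l T H k φ ∧ satAux l T H k ψ
  | H, k, .disj φ ψ => satAux l T H k φ ∨ satAux l T H k ψ
  | H, k, .impl φ ψ =>
      (satAux l T H k φ → satAux l T H k ψ) ∧ (satAux l T T k φ → satAux l T T k ψ)
  | H, k, .prev φ => 0 < k ∧ satAux l T H (k - 1) φ
  | H, k, .since φ ψ =>
      ∃ j, j ≤ k ∧ satAux l T H j ψ ∧ ∀ i, j < i → i ≤ k → satAux l T H i φ
  | H, k, .trigger φ ψ =>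
      ∀ j, j ≤ k → satAux l T H j ψ ∨ ∃ i, j < i ∧ i ≤ k ∧ satAux l T H i φ
  | H, k, .next φ => ((k + 1 : ℕ) : ℕ∞) < l ∧ satAux l T H (k + 1) φ
  | H, k, .untl φ ψ =>
      ∃ j, k ≤ j ∧ (j : ℕ∞) < l ∧ satAux l T H j ψ ∧ ∀ i, k ≤ i → i < j → satAux l T H i φ
  | H, k, .release φ ψ =>
      ∀ j, k ≤ j → (j : ℕ∞) < l → satAux l T H j ψ ∨ ∃ i, k ≤ i ∧ i < j ∧ satAux l T H i φ
  | H, k, .whil φ ψ =>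
      (∀ j, k ≤ j → (j : ℕ∞) < l →
          satAux l T H j φ ∨ ∃ i, k ≤ i ∧ i < j ∧ ¬ satAux l T H i ψ)
        ∧
      (∀ j, k ≤ j → (j : ℕ∞) < l →
          satAux l T T j φ ∨ ∃ i, k ≤ i ∧ i < j ∧ ¬ satAux l T T i ψ)

/-- `Sat l H T k φ` : the HT-trace `⟨H,T⟩` of length `l` satisfies `φ` at time `k`. -/
def Sat {A : Type} (l : ℕ∞) (H T : ℕ → Set A) (k : ℕ) (φ : Formula A) : Prop :=
  satAux l T H k φ

/-- `⟨H,T⟩` is an HT-trace of length `l`. -/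
def IsHT {A : Type} (l : ℕ∞) (H T : ℕ → Set A) : Prop :=
  ∀ i : ℕ, (i : ℕ∞) < l → H i ⊆ T i

def TraceLe {A : Type} (l : ℕ∞) (H T : ℕ → Set A) : Prop :=
  ∀ i : ℕ, (i : ℕ∞) < l → H i ⊆ T i

def TraceEq {A : Type} (l : ℕ∞) (H T : ℕ → Set A) : Prop :=
  ∀ i : ℕ, (i : ℕ∞) < l → H i = T i

def TraceLt {A : Type} (l : ℕ∞) (H T : ℕ → Set A) : Prop :=
  TraceLe l H T ∧ ¬ TraceEq l H T

def Formula.neg {A : Type} (φ : Formula A) : Formula A := .impl φ .falsum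
def Formula.always {A : Type} (φ : Formula A) : Formula A := .release .falsum φ
def Formula.ev {A : Type} (φ : Formula A) : Formula A := .untl .verum φ
def Formula.final {A : Type} : Formula A := Formula.neg (.next .verum)
def Formula.wnext {A : Type} (φ : Formula A) : Formula A := .disj (.next φ) .final
def Formula.initial {A : Type} : Formula A := Formula.neg (.prev .verum)
def Formula.wprev {A : Type} (φ : Formula A) : Formula A := .disj (.prev φ) .initial
def Formula.evP {A : Type} (φ : Formula A) : Formula A := .since .verum φ
def Formula.alwP {A : Type} (φ : Formula A) : Formula A := .trigger .falsum φ

/-- THT-equivalence of two formulas. -/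
def ThtEquiv {A : Type} (φ ψ : Formula A) : Prop :=
  ∀ (l : ℕ∞) (H T : ℕ → Set A), IsHT l H T →
    ∀ k : ℕ, (k : ℕ∞) < l → (Sat l H T k φ ↔ Sat l H T k ψ)

/-- `⟨H,T⟩` is a model of the theory `Γ`. -/
def IsModel {A : Type} (l : ℕ∞) (H T : ℕ → Set A) (Γ : Set (Formula A)) : Prop :=
  (0 : ℕ∞) < l ∧ ∀ φ ∈ Γ, Sat l H T 0 φ

/-- `T` (of length `l`) is a temporal stable model of `Γ`. -/
def IsTS {A : Type} (l : ℕ∞) (T : ℕ → Set A) (Γ : Set (Formula A)) : Prop :=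
  IsModel l T T Γ ∧ ∀ H : ℕ → Set A, TraceLt l H T → ¬ IsModel l H T Γ

/-- W-free temporal formulas. -/
def WFree {A : Type} : Formula A → Prop
  | .atom _ => True
  | .falsum => True
  | .verum => True
  | .conj φ ψ => WFree φ ∧ WFree ψ
  | .disj φ ψ => WFree φ ∧ WFree ψ
  | .impl φ ψ => WFree φ ∧ WFree ψ
  | .prev φ => WFree φ
  | .since φ ψ => WFree φ ∧ WFree ψ
  | .trigger φ ψ => WFree φ ∧ WFree ψ
  | .next φ => WFree φ
  | .untl φ ψ => WFree φ ∧ WFree ψ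
  | .release φ ψ => WFree φ ∧ WFree ψ
  | .whil φ ψ => False

/-- Embedding of a formula over `𝒜` into the extended alphabet `𝒜* = 𝒜 ⊕ 𝒜`
(`Sum.inl a` is the original atom `a`, `Sum.inr a` is the primed copy `a'`),
leaving every atom unprimed. -/
def unprimed {A : Type} : Formula A → Formula (A ⊕ A)
  | .atom a => .atom (.inl a)
  | .falsum => .falsum
  | .verum => .verum
  | .conj φ ψ => .conj (unprimed φ) (unprimed ψ)
  | .disj φ ψ => .disj (unprimed φ) (unprimed ψ)
  | .impl φ ψ => .impl (unprimed φ) (unprimed ψ)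
  | .prev φ => .prev (unprimed φ)
  | .since φ ψ => .since (unprimed φ) (unprimed ψ)
  | .trigger φ ψ => .trigger (unprimed φ) (unprimed ψ)
  | .next φ => .next (unprimed φ)
  | .untl φ ψ => .untl (unprimed φ) (unprimed ψ)
  | .release φ ψ => .release (unprimed φ) (unprimed ψ)
  | .whil φ ψ => .whil (unprimed φ) (unprimed ψ)

/-- The translation `φ*` over the extended alphabet: atoms are primed,
`(φ→ψ)* = (φ→ψ) ∧ (φ*→ψ*)`, all other connectives commute with `*`. -/
def star {A : Type} : Formula A → Formula (A ⊕ A)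
  | .atom a => .atom (.inr a)
  | .falsum => .falsum
  | .verum => .verum
  | .conj φ ψ => .conj (star φ) (star ψ)
  | .disj φ ψ => .disj (star φ) (star ψ)
  | .impl φ ψ => .conj (.impl (unprimed φ) (unprimed ψ)) (.impl (star φ) (star ψ))
  | .prev φ => .prev (star φ)
  | .since φ ψ => .since (star φ) (star ψ)
  | .trigger φ ψ => .trigger (star φ) (star ψ)
  | .next φ => .next (star φ)
  | .untl φ ψ => .untl (star φ) (star ψ)
  | .release φ ψ => .release (star φ) (star ψ)
  | .whil φ ψ => .whil (star φ) (star ψ)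

/-- The trace `T*` over `𝒜*` associated with the HT-trace `⟨H,T⟩`:
`T*_i = T_i ∪ {a' : a ∈ H_i}`. -/
def starTrace {A : Type} (H T : ℕ → Set A) : ℕ → Set (A ⊕ A) :=
  fun i => (Sum.inl '' T i) ∪ (Sum.inr '' H i)

lemma mem_starTrace_inl {A : Type} (H T : ℕ → Set A) (a : A) (i : ℕ) :
    Sum.inl a ∈ starTrace H T i ↔ a ∈ T i := by
  simp [starTrace]

lemma mem_starTrace_inr {A : Type} (H T : ℕ → Set A) (a : A) (i : ℕ) :
    Sum.inr a ∈ starTrace H T i ↔ a ∈ H i := by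
  simp [starTrace]

lemma unprimed_sat {A : Type} (l : ℕ∞) (H T : ℕ → Set A) (φ : Formula A) :
    ∀ k, satAux l T T k φ ↔ satAux l (starTrace H T) (starTrace H T) k (unprimed φ) := by
  induction φ with
  | atom a => intro k; simp [satAux, unprimed, mem_starTrace_inl]
  | falsum => intro k; simp [satAux, unprimed]
  | verum => intro k; simp [satAux, unprimed]
  | conj φ ψ ihφ ihψ => intro k; simp [satAux, unprimed, ihφ, ihψ]
  | disj φ ψ ihφ ihψ => intro k; simp [satAux, unprimed, ihφ, ihψ]
  | impl φ ψ ihφ ihψ => intro k; simp [satAux, unprimed, ihφ, ihψ]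
  | prev φ ih => intro k; simp [satAux, unprimed, ih]
  | since φ ψ ihφ ihψ => intro k; simp [satAux, unprimed, ihφ, ihψ]
  | trigger φ ψ ihφ ihψ => intro k; simp [satAux, unprimed, ihφ, ihψ]
  | next φ ih => intro k; simp [satAux, unprimed, ih]
  | untl φ ψ ihφ ihψ => intro k; simp [satAux, unprimed, ihφ, ihψ]
  | release φ ψ ihφ ihψ => intro k; simp [satAux, unprimed, ihφ, ihψ]
  | whil φ ψ ihφ ihψ => intro k; simp [satAux, unprimed, ihφ, ihψ]

lemma star_sat {A : Type} (l : ℕ∞) (H T : ℕ → Set A) (φ : Formula A) (hW : WFree φ) :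
    ∀ k, satAux l T H k φ ↔ satAux l (starTrace H T) (starTrace H T) k (star φ) := by
  induction φ with
  | atom a => intro k; simp [satAux, _root_.star, mem_starTrace_inr]
  | falsum => intro k; simp [satAux, _root_.star]
  | verum => intro k; simp [satAux, _root_.star]
  | conj φ ψ ihφ ihψ =>
      intro k; simp [satAux, _root_.star, ihφ hW.1, ihψ hW.2]
  | disj φ ψ ihφ ihψ =>
      intro k; simp [satAux, _root_.star, ihφ hW.1, ihψ hW.2]
  | impl φ ψ ihφ ihψ =>
      intro k
      simp only [satAux, _root_.star, ihφ hW.1, ihψ hW.2,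
        ← unprimed_sat l H T φ, ← unprimed_sat l H T ψ]
      tauto
  | prev φ ih => intro k; simp [satAux, _root_.star, ih hW]
  | since φ ψ ihφ ihψ =>
      intro k; simp [satAux, _root_.star, ihφ hW.1, ihψ hW.2]
  | trigger φ ψ ihφ ihψ =>
      intro k; simp [satAux, _root_.star, ihφ hW.1, ihψ hW.2]
  | next φ ih => intro k; simp [satAux, _root_.star, ih hW]
  | untl φ ψ ihφ ihψ =>
      intro k; simp [satAux, _root_.star, ihφ hW.1, ihψ hW.2]
  | release φ ψ ihφ ihψ =>
      intro k; simp [satAux, _root_.star, ihφ hW.1, ihψ hW.2]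
  | whil φ ψ ihφ ihψ => exact absurd hW (by simp [WFree])

/-- Translation of THT into LTL: (i) `T*` satisfies every instance `a' → a` at
every time point; (ii) for every W-free formula `φ`, `⟨H,T⟩,k ⊨ φ` in THT iff
`T*,k ⊨ φ*` in LTL. -/
theorem tht_to_ltl {A : Type} (l : ℕ∞) (H T : ℕ → Set A) (hHT : IsHT l H T) :
    (∀ (a : A) (j : ℕ), (j : ℕ∞) < l →
        Sat l (starTrace H T) (starTrace H T) j (.impl (.atom (.inr a)) (.atom (.inl a))))
    ∧ (∀ φ : Formula A, WFree φ → ∀ k : ℕ, (k : ℕ∞) < l →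
        (Sat l H T k φ ↔ Sat l (starTrace H T) (starTrace H T) k (star φ))) := by
  constructor
  · intro a j hj
    have := hHT j hj
    simp only [Sat, satAux, mem_starTrace_inl, mem_starTrace_inr]
    exact ⟨fun h => this h, fun h => this h⟩
  · intro φ hφ k _
    exact star_sat l H T φ hφ k
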